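/- Let G be the 3-SAT total-bondage construction (variable gadgets H_i on {u_i, ū_i, v_i, v_i'}, clause vertices c_j adjacent to their three literals, gadget H on {s_1,…,s_5} with s_1 and s_3 joined to all c_j). Then γ_t(G) = 2n + 2 if and only if the 3-SAT instance is satisfiable. -/
import Mathlib


/-- A literal over `n` variables: a variable index together with a polarity
(`true` = the positive literal `uᵢ`, `false` = the negated literal `ūᵢ`). -/
abbrev Lit (n : ℕ) := Fin n × Bool

/-- Vertex type of the total-bondage construction: literal vertices `uᵢ, ūᵢ`,
gadget vertices `vᵢ` (second component `false`) and `vᵢ'` (second component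
`true`), clause vertices `cⱼ`, and the vertices `s₁, …, s₅`. -/
abbrev TVert (n m : ℕ) := Lit n ⊕ ((Fin n × Bool) ⊕ (Fin m ⊕ Fin 5))

/-- The literal vertex `uᵢ` (if `b = true`) or `ūᵢ` (if `b = false`). -/
def tlit {n m : ℕ} (i : Fin n) (b : Bool) : TVert n m := Sum.inl (i, b)

/-- The gadget vertex `vᵢ`. -/
def tvv {n m : ℕ} (i : Fin n) : TVert n m := Sum.inr (Sum.inl (i, false))

/-- The gadget vertex `vᵢ'`. -/
def tvv' {n m : ℕ} (i : Fin n) : TVert n m := Sum.inr (Sum.inl (i, true))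

/-- The clause vertex `cⱼ`. -/
def tcv {n m : ℕ} (j : Fin m) : TVert n m := Sum.inr (Sum.inr (Sum.inl j))

/-- The vertex `s₍ₖ₊₁₎` for `k : Fin 5` (so `tsv 0 = s₁`, …, `tsv 4 = s₅`). -/
def tsv {n m : ℕ} (k : Fin 5) : TVert n m := Sum.inr (Sum.inr (Sum.inr k))

/-- Base adjacency relation of the total-bondage construction (symmetrized by
`fromRel`): gadget edges `vᵢuᵢ, uᵢūᵢ, ūᵢvᵢ, vᵢvᵢ'`; clause edges joining `cⱼ`
to its three literals; gadget `H` edges `s₁s₂, s₁s₄, s₂s₃, s₂s₄, s₄s₅`; and the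
edges joining `s₁` and `s₃` to every `cⱼ`. -/
def totRel {n m : ℕ} (C : Fin m → Fin 3 → Lit n) : TVert n m → TVert n m → Prop
  | Sum.inl (i, b), Sum.inl (i', b') => i = i' ∧ b ≠ b'
  | Sum.inl (i, _), Sum.inr (Sum.inl (i', c)) => i = i' ∧ c = false
  | Sum.inr (Sum.inl (i, false)), Sum.inr (Sum.inl (i', true)) => i = i'
  | Sum.inl l, Sum.inr (Sum.inr (Sum.inl j)) => ∃ k, C j k = l
  | Sum.inr (Sum.inr (Sum.inr p)), Sum.inr (Sum.inr (Sum.inr q)) =>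
      (p = 0 ∧ q = 1) ∨ (p = 0 ∧ q = 3) ∨ (p = 1 ∧ q = 2) ∨ (p = 1 ∧ q = 3) ∨
        (p = 3 ∧ q = 4)
  | Sum.inr (Sum.inr (Sum.inr p)), Sum.inr (Sum.inr (Sum.inl _)) => p = 0 ∨ p = 2
  | _, _ => False

/-- The graph of the total-bondage construction associated with a 3-SAT instance `C`. -/
def totGraph {n m : ℕ} (C : Fin m → Fin 3 → Lit n) : SimpleGraph (TVert n m) :=
  SimpleGraph.fromRel (totRel C)

/-- `D` is a total dominating set of `G`: every vertex of `G` (including the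
vertices of `D`) has a neighbor in `D`. -/
def IsTotalDomSet {V : Type*} (G : SimpleGraph V) (D : Finset V) : Prop :=
  ∀ v : V, ∃ u ∈ D, G.Adj u v

/-- The total domination number of `G`: the minimum cardinality of a total
dominating set. -/
noncomputable def totalDomNum {V : Type*} (G : SimpleGraph V) : ℕ :=
  sInf {k | ∃ D : Finset V, IsTotalDomSet G D ∧ D.card = k}

/-- The 3-SAT instance `C` is satisfiable: some truth assignment makes at least
one literal in every clause true. -/
def Satisfiable {n m : ℕ} (C : Fin m → Fin 3 → Lit n) : Prop :=
  ∃ t : Fin n → Bool, ∀ j : Fin m, ∃ k : Fin 3, t (C j k).1 = (C j k).2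

section Helpers
variable {n m : ℕ} {C : Fin m → Fin 3 → Lit n}

lemma adj_iff {a b : TVert n m} :
    (totGraph C).Adj a b ↔ a ≠ b ∧ (totRel C a b ∨ totRel C b a) := Iff.rfl

lemma adj_vv' {u : TVert n m} {i : Fin n} :
    (totGraph C).Adj u (tvv' i) ↔ u = tvv i := by
  rw [adj_iff]
  rcases u with ⟨i', b'⟩ | ⟨⟨i', c'⟩ | j' | k'⟩
  · simp [totRel, tvv', tvv, tlit]
  · rcases c' with _ | _ <;> simp [totRel, tvv', tvv]
  · simp [totRel, tvv', tvv, tcv]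
  · simp [totRel, tvv', tvv, tsv]

lemma adj_vv {u : TVert n m} {i : Fin n} :
    (totGraph C).Adj u (tvv i) ↔ u = tlit i true ∨ u = tlit i false ∨ u = tvv' i := by
  rw [adj_iff]
  rcases u with ⟨i', b'⟩ | ⟨⟨i', c'⟩ | j' | k'⟩
  · rcases b' with _ | _ <;> simp [totRel, tvv', tvv, tlit]
  · rcases c' with _ | _ <;> simp [totRel, tvv', tvv, tlit]
    exact eq_comm
  · simp [totRel, tvv', tvv, tcv, tlit]
  · simp [totRel, tvv', tvv, tsv, tlit]

lemma adj_s5 {u : TVert n m} :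
    (totGraph C).Adj u (tsv 4) ↔ u = tsv 3 := by
  rw [adj_iff]
  rcases u with ⟨i', b'⟩ | ⟨⟨i', c'⟩ | j' | k'⟩
  · simp [totRel, tsv, tlit]
  · rcases c' with _ | _ <;> simp [totRel, tsv]
  · simp [totRel, tsv, tcv]
  · simp [totRel, tsv]
    revert k'; decide

lemma adj_s4 {u : TVert n m} :
    (totGraph C).Adj u (tsv 3) ↔ u = tsv 0 ∨ u = tsv 1 ∨ u = tsv 4 := by
  rw [adj_iff]
  rcases u with ⟨i', b'⟩ | ⟨⟨i', c'⟩ | j' | k'⟩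
  · simp [totRel, tsv, tlit]
  · rcases c' with _ | _ <;> simp [totRel, tsv]
  · simp [totRel, tsv, tcv]
  · simp [totRel, tsv]
    revert k'; decide

lemma adj_s3 {u : TVert n m} :
    (totGraph C).Adj u (tsv 2) ↔ u = tsv 1 ∨ ∃ j, u = tcv j := by
  rw [adj_iff]
  rcases u with ⟨i', b'⟩ | ⟨⟨i', c'⟩ | j' | k'⟩
  · simp [totRel, tsv, tlit, tcv]
  · rcases c' with _ | _ <;> simp [totRel, tsv, tcv]
  · simp [totRel, tsv, tcv]
  · simp [totRel, tsv, tcv]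
    revert k'; decide

lemma adj_cv {u : TVert n m} {j : Fin m} :
    (totGraph C).Adj u (tcv j) ↔ (∃ k, u = Sum.inl (C j k)) ∨ u = tsv 0 ∨ u = tsv 2 := by
  rw [adj_iff]
  rcases u with ⟨i', b'⟩ | ⟨⟨i', c'⟩ | j' | k'⟩
  · simp [totRel, tsv, tlit, tcv]
    exact exists_congr fun k => eq_comm
  · rcases c' with _ | _ <;> simp [totRel, tsv, tcv]
  · simp [totRel, tsv, tcv]
  · simp [totRel, tsv, tcv]

lemma adj_s2s1 : (totGraph C).Adj (tsv 1) (tsv 0) := by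
  rw [adj_iff]
  refine ⟨by simp [tsv], Or.inr ?_⟩
  show (0 : Fin 5) = 0 ∧ (1 : Fin 5) = 1 ∨ _
  tauto

/-- packaging function for the canonical `2n+2`-element set. -/
def pack {n m : ℕ} (w : Fin n → TVert n m) (x : TVert n m) :
    Fin n ⊕ Fin n ⊕ Fin 2 → TVert n m
  | .inl i => tvv i
  | .inr (.inl i) => w i
  | .inr (.inr k) => if k = 0 then tsv 3 else x

lemma mem_pack {w : Fin n → TVert n m} {x y : TVert n m} :
    y ∈ Finset.image (pack w x) Finset.univ ↔
      (∃ i, y = tvv i) ∨ (∃ i, y = w i) ∨ y = tsv 3 ∨ y = x := by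
  simp only [Finset.mem_image, Finset.mem_univ, true_and]
  constructor
  · rintro ⟨a, rfl⟩
    rcases a with i | i | k
    · exact Or.inl ⟨i, rfl⟩
    · exact Or.inr (Or.inl ⟨i, rfl⟩)
    · fin_cases k
      · exact Or.inr (Or.inr (Or.inl (by simp [pack])))
      · exact Or.inr (Or.inr (Or.inr (by simp [pack])))
  · rintro (⟨i, rfl⟩ | ⟨i, rfl⟩ | rfl | rfl)
    exacts [⟨.inl i, rfl⟩, ⟨.inr (.inl i), rfl⟩, ⟨.inr (.inr 0), by simp [pack]⟩,
      ⟨.inr (.inr 1), by simp [pack]⟩]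

lemma pack_inj {w : Fin n → TVert n m} {x : TVert n m}
    (hw : ∀ i, w i = tlit i true ∨ w i = tlit i false ∨ w i = tvv' i)
    (hx : x = tsv 0 ∨ x = tsv 1 ∨ x = tsv 4) :
    Function.Injective (pack w x) := by
  intro a b hab
  rcases a with i | i | k <;> rcases b with i' | i' | k'
  · simp only [pack, tvv] at hab
    simp_all
  · rcases hw i' with h | h | h <;> rw [pack, pack, h] at hab <;>
      simp [tvv, tlit, tvv'] at hab
  · exfalso; rcases hx with rfl | rfl | rfl <;> rw [pack, pack] at hab <;>
      split at hab <;> simp [tvv, tsv] at hab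
  · rcases hw i with h | h | h <;> rw [pack, pack, h] at hab <;>
      simp [tvv, tlit, tvv'] at hab
  · rcases hw i with h | h | h <;> rcases hw i' with h' | h' | h' <;>
      rw [pack, pack, h, h'] at hab <;> simp [tlit, tvv'] at hab <;> simp [hab]
  · exfalso; rcases hw i with h | h | h <;> rcases hx with rfl | rfl | rfl <;>
      rw [pack, pack, h] at hab <;> split at hab <;>
      simp [tlit, tvv', tsv] at hab
  · exfalso; rcases hx with rfl | rfl | rfl <;> rw [pack, pack] at hab <;>
      split at hab <;> simp [tvv, tsv] at hab
  · exfalso; rcases hw i' with h | h | h <;> rcases hx with rfl | rfl | rfl <;>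
      rw [pack, pack, h] at hab <;> split at hab <;>
      simp [tlit, tvv', tsv] at hab
  · rcases hx with rfl | rfl | rfl <;> rw [pack, pack] at hab <;>
      fin_cases k <;> fin_cases k' <;> simp_all [tsv]

lemma card_pack {w : Fin n → TVert n m} {x : TVert n m}
    (hw : ∀ i, w i = tlit i true ∨ w i = tlit i false ∨ w i = tvv' i)
    (hx : x = tsv 0 ∨ x = tsv 1 ∨ x = tsv 4) :
    (Finset.image (pack w x) Finset.univ).card = 2 * n + 2 := by
  rw [Finset.card_image_of_injective _ (pack_inj hw hx), Finset.card_univ]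
  simp
  ring

lemma lower_bound (D : Finset (TVert n m)) (hD : IsTotalDomSet (totGraph C) D) :
    2 * n + 2 ≤ D.card := by
  have hv : ∀ i, tvv i ∈ D := by
    intro i
    obtain ⟨u, hu, ha⟩ := hD (tvv' i)
    rwa [adj_vv'.mp ha] at hu
  have hwex : ∀ i : Fin n, ∃ u, u ∈ D ∧
      (u = tlit i true ∨ u = tlit i false ∨ u = tvv' i) := by
    intro i
    obtain ⟨u, hu, ha⟩ := hD (tvv i)
    exact ⟨u, hu, adj_vv.mp ha⟩
  choose w hwD hwv using hwex
  have hs4 : tsv 3 ∈ D := by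
    obtain ⟨u, hu, ha⟩ := hD (tsv 4)
    rwa [adj_s5.mp ha] at hu
  obtain ⟨x, hxD, hxv⟩ := hD (tsv 3)
  rw [adj_s4] at hxv
  have hsub : Finset.image (pack w x) Finset.univ ⊆ D := by
    intro y hy
    rcases mem_pack.mp hy with ⟨i, rfl⟩ | ⟨i, rfl⟩ | rfl | rfl
    exacts [hv i, hwD i, hs4, hxD]
  calc 2 * n + 2 = (Finset.image (pack w x) Finset.univ).card :=
        (card_pack hwv hxv).symm
    _ ≤ D.card := Finset.card_le_card hsub

lemma upper_bound {t : Fin n → Bool} (ht : ∀ j : Fin m, ∃ k : Fin 3, t (C j k).1 = (C j k).2) :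
    IsTotalDomSet (totGraph C)
      (Finset.image (pack (fun i => tlit i (t i)) (tsv 1)) Finset.univ) := by
  intro v
  have hmem := fun y => (mem_pack (w := fun i => tlit i (t i)) (x := (tsv 1 : TVert n m)) (y := y)).mpr
  rcases v with ⟨i, b⟩ | ⟨⟨i, c⟩ | j | k⟩
  · refine ⟨tvv i, hmem _ (Or.inl ⟨i, rfl⟩), ((totGraph C).adj_symm (adj_vv.mpr ?_))⟩
    cases b
    · exact Or.inr (Or.inl rfl)
    · exact Or.inl rfl
  · cases c
    · -- v = tvv i
      refine ⟨tlit i (t i), hmem _ (Or.inr (Or.inl ⟨i, rfl⟩)), adj_vv.mpr ?_⟩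
      cases h : t i
      · exact Or.inr (Or.inl rfl)
      · exact Or.inl rfl
    · -- v = tvv' i
      exact ⟨tvv i, hmem _ (Or.inl ⟨i, rfl⟩), adj_vv'.mpr rfl⟩
  · -- clause vertex
    obtain ⟨k, hk⟩ := ht j
    refine ⟨tlit (C j k).1 (t (C j k).1), hmem _ (Or.inr (Or.inl ⟨(C j k).1, rfl⟩)),
      adj_cv.mpr (Or.inl ⟨k, ?_⟩)⟩
    rw [hk, tlit]
  · fin_cases k
    · exact ⟨tsv 1, hmem _ (Or.inr (Or.inr (Or.inr rfl))), adj_s2s1⟩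
    · exact ⟨tsv 3, hmem _ (Or.inr (Or.inr (Or.inl rfl))),
        ((totGraph C).adj_symm (adj_s4.mpr (Or.inr (Or.inl rfl))))⟩
    · exact ⟨tsv 1, hmem _ (Or.inr (Or.inr (Or.inr rfl))), adj_s3.mpr (Or.inl rfl)⟩
    · exact ⟨tsv 1, hmem _ (Or.inr (Or.inr (Or.inr rfl))), adj_s4.mpr (Or.inr (Or.inl rfl))⟩
    · exact ⟨tsv 3, hmem _ (Or.inr (Or.inr (Or.inl rfl))), adj_s5.mpr rfl⟩

end Helpers

/-- In the total-bondage construction, `γ_t(G) = 2n + 2` iff the 3-SAT instance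
is satisfiable. -/
theorem totGraph_totalDomNum_eq_iff_satisfiable {n m : ℕ} (C : Fin m → Fin 3 → Lit n) :
    totalDomNum (totGraph C) = 2 * n + 2 ↔ Satisfiable C := by
  constructor
  · intro h
    have hne : {k | ∃ D : Finset (TVert n m),
        IsTotalDomSet (totGraph C) D ∧ D.card = k}.Nonempty := by
      by_contra hemp
      rw [Set.not_nonempty_iff_eq_empty] at hemp
      rw [totalDomNum, hemp, Nat.sInf_empty] at h
      omega
    obtain ⟨D, hD, hcard⟩ := Nat.sInf_mem hne
    rw [show sInf {k | ∃ D : Finset (TVert n m),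
        IsTotalDomSet (totGraph C) D ∧ D.card = k} = totalDomNum (totGraph C) from rfl, h]
      at hcard
    -- extract the structure of D
    have hv : ∀ i, tvv i ∈ D := by
      intro i
      obtain ⟨u, hu, ha⟩ := hD (tvv' i)
      rwa [adj_vv'.mp ha] at hu
    have hwex : ∀ i : Fin n, ∃ u, u ∈ D ∧
        (u = tlit i true ∨ u = tlit i false ∨ u = tvv' i) := by
      intro i
      obtain ⟨u, hu, ha⟩ := hD (tvv i)
      exact ⟨u, hu, adj_vv.mp ha⟩
    choose w hwD hwv using hwex
    have hs4 : tsv 3 ∈ D := by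
      obtain ⟨u, hu, ha⟩ := hD (tsv 4)
      rwa [adj_s5.mp ha] at hu
    obtain ⟨x, hxD, hxv⟩ := hD (tsv 3)
    rw [adj_s4] at hxv
    have hsub : Finset.image (pack w x) Finset.univ ⊆ D := by
      intro y hy
      rcases mem_pack.mp hy with ⟨i, rfl⟩ | ⟨i, rfl⟩ | rfl | rfl
      exacts [hv i, hwD i, hs4, hxD]
    have hDE : Finset.image (pack w x) Finset.univ = D :=
      Finset.eq_of_subset_of_card_le hsub (by rw [hcard, card_pack hwv hxv])
    have hmemD : ∀ y : TVert n m, y ∈ D ↔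
        (∃ i, y = tvv i) ∨ (∃ i, y = w i) ∨ y = tsv 3 ∨ y = x := by
      intro y; rw [← hDE]; exact mem_pack
    -- x must be s₂
    have hx1 : x = tsv 1 := by
      obtain ⟨u, hu, ha⟩ := hD (tsv 2)
      rcases adj_s3.mp ha with rfl | ⟨j, rfl⟩
      · rcases (hmemD _).mp hu with ⟨i, h⟩ | ⟨i, h⟩ | h | h
        · exact absurd h (by simp [tsv, tvv])
        · rcases hwv i with h' | h' | h' <;> rw [h'] at h <;>
            exact absurd h (by simp [tsv, tlit, tvv'])
        · exact absurd h (by simp [tsv])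
        · exact h.symm
      · exfalso
        rcases (hmemD _).mp hu with ⟨i, h⟩ | ⟨i, h⟩ | h | h
        · exact absurd h (by simp [tcv, tvv])
        · rcases hwv i with h' | h' | h' <;> rw [h'] at h <;>
            exact absurd h (by simp [tcv, tlit, tvv'])
        · exact absurd h (by simp [tcv, tsv])
        · rcases hxv with rfl | rfl | rfl <;> exact absurd h (by simp [tcv, tsv])
    subst hx1
    -- every clause has a literal in D
    have hcl : ∀ j : Fin m, ∃ k, (Sum.inl (C j k) : TVert n m) ∈ D := by
      intro j
      obtain ⟨u, hu, ha⟩ := hD (tcv j)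
      rcases adj_cv.mp ha with ⟨k, rfl⟩ | rfl | rfl
      · exact ⟨k, hu⟩
      · exfalso
        rcases (hmemD _).mp hu with ⟨i, h⟩ | ⟨i, h⟩ | h | h
        · exact absurd h (by simp [tsv, tvv])
        · rcases hwv i with h' | h' | h' <;> rw [h'] at h <;>
            exact absurd h (by simp [tsv, tlit, tvv'])
        · exact absurd h (by simp [tsv])
        · exact absurd h (by simp [tsv])
      · exfalso
        rcases (hmemD _).mp hu with ⟨i, h⟩ | ⟨i, h⟩ | h | h
        · exact absurd h (by simp [tsv, tvv])
        · rcases hwv i with h' | h' | h' <;> rw [h'] at h <;>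
            exact absurd h (by simp [tsv, tlit, tvv'])
        · exact absurd h (by simp [tsv])
        · exact absurd h (by simp [tsv])
    -- a literal in D determines w i
    have huniq : ∀ (i : Fin n) (b : Bool), (Sum.inl (i, b) : TVert n m) ∈ D →
        w i = tlit i b := by
      intro i b hb
      rcases (hmemD _).mp hb with ⟨i', h⟩ | ⟨i', h⟩ | h | h
      · exact absurd h (by simp [tvv])
      · rcases hwv i' with h' | h' | h' <;> rw [h'] at h
        · simp only [tlit, Sum.inl.injEq, Prod.mk.injEq] at h
          obtain ⟨rfl, rfl⟩ := h
          exact h'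
        · simp only [tlit, Sum.inl.injEq, Prod.mk.injEq] at h
          obtain ⟨rfl, rfl⟩ := h
          exact h'
        · exact absurd h (by simp [tvv'])
      · exact absurd h (by simp [tsv])
      · exact absurd h (by simp [tsv])
    refine ⟨fun i => decide ((Sum.inl (i, true) : TVert n m) ∈ D), fun j => ?_⟩
    obtain ⟨k, hk⟩ := hcl j
    refine ⟨k, ?_⟩
    have heta : C j k = ((C j k).1, (C j k).2) := rfl
    cases hb : (C j k).2
    · simp only [decide_eq_false_iff_not]
      intro hmem
      have h1 := huniq _ _ hmem
      have h2 := huniq (C j k).1 false (by rw [heta, hb] at hk; exact hk)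
      rw [h1] at h2
      simp [tlit] at h2
    · simp only [decide_eq_true_eq]
      rw [heta, hb] at hk
      exact hk
  · rintro ⟨t, ht⟩
    have hwv : ∀ i : Fin n, (tlit i (t i) : TVert n m) = tlit i true ∨
        (tlit i (t i) : TVert n m) = tlit i false ∨ (tlit i (t i) : TVert n m) = tvv' i := by
      intro i
      cases h : t i
      · exact Or.inr (Or.inl (by rw [← h]))
      · exact Or.inl (by rw [← h])
    have hxv : (tsv 1 : TVert n m) = tsv 0 ∨ (tsv 1 : TVert n m) = tsv 1 ∨
        (tsv 1 : TVert n m) = tsv 4 := Or.inr (Or.inl rfl)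
    have hmem : (2 * n + 2) ∈ {k | ∃ D : Finset (TVert n m),
        IsTotalDomSet (totGraph C) D ∧ D.card = k} :=
      ⟨_, upper_bound ht, card_pack hwv hxv⟩
    refine le_antisymm (Nat.sInf_le hmem) (le_csInf ⟨_, hmem⟩ ?_)
    rintro b ⟨D, hD, rfl⟩
    exact lower_bound D hD
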